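/- arXiv:2012.12963 — 6 statements merged into one kernel-verified Lean document; each statement's English description precedes it below -/
import Mathlib

section
/- Let M be an invertible real 4×4 matrix such that: (i) for all (x,y,z) ∈ ℝ³ with z ≥ 0 one has (M·(x,y,z,1)ᵀ)₄ ≠ 0; (ii) φ_M(0,0,0) = (0,0,0); (iii) φ_M maps each coordinate axis into itself, i.e. for every t ∈ ℝ at which the relevant point is in the domain, φ_M(t,0,0) has vanishing second and third coordinates, φ_M(0,t,0) has vanishing first and third coordinates, and φ_M(0,0,t) has vanishing first and second coordinates; (iv) the Fréchet derivative of φ_M at the origin is the identity map of ℝ³. Then there exist c ≥ 0 and λ ∈ ℝ, λ ≠ 0, such that M = λ·M_c, where M_c is the 4×4 matrix with ones on the diagonal, entry c in row 4 column 3, and zeros elsewhere. -/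
open Matrix

/-- The partial map of `ℝ³` induced by a real 4×4 matrix `M` in homogeneous
coordinates: `φ_M(x,y,z)ᵢ = (M·(x,y,z,1)ᵀ)ᵢ / (M·(x,y,z,1)ᵀ)₄` for `i = 1,2,3`. -/
noncomputable def phiM (M : Matrix (Fin 4) (Fin 4) ℝ) (p : ℝ × ℝ × ℝ) : ℝ × ℝ × ℝ :=
  ((M.mulVec ![p.1, p.2.1, p.2.2, 1]) 0 / (M.mulVec ![p.1, p.2.1, p.2.2, 1]) 3,
   (M.mulVec ![p.1, p.2.1, p.2.2, 1]) 1 / (M.mulVec ![p.1, p.2.1, p.2.2, 1]) 3,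
   (M.mulVec ![p.1, p.2.1, p.2.2, 1]) 2 / (M.mulVec ![p.1, p.2.1, p.2.2, 1]) 3)

/-- The 4×4 matrix with ones on the diagonal, entry `c` in row 4, column 3,
and zeros elsewhere. -/
noncomputable def Mc (c : ℝ) : Matrix (Fin 4) (Fin 4) ℝ :=
  !![1, 0, 0, 0; 0, 1, 0, 0; 0, 0, 1, 0; 0, 0, c, 1]

lemma mv (M : Matrix (Fin 4) (Fin 4) ℝ) (x y z : ℝ) (i : Fin 4) :
    M.mulVec ![x, y, z, 1] i = M i 0 * x + M i 1 * y + M i 2 * z + M i 3 := by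
  simp [Matrix.mulVec, dotProduct, Fin.sum_univ_four]

/-- Characterization of the subject's projective charts. -/
theorem stmt_0 (M : Matrix (Fin 4) (Fin 4) ℝ) (hM : IsUnit M.det)
    (h1 : ∀ x y z : ℝ, 0 ≤ z → (M.mulVec ![x, y, z, 1]) 3 ≠ 0)
    (h2 : phiM M (0, 0, 0) = (0, 0, 0))
    (hx : ∀ t : ℝ, (M.mulVec ![t, 0, 0, 1]) 3 ≠ 0 →
      (phiM M (t, 0, 0)).2.1 = 0 ∧ (phiM M (t, 0, 0)).2.2 = 0)
    (hy : ∀ t : ℝ, (M.mulVec ![0, t, 0, 1]) 3 ≠ 0 →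
      (phiM M (0, t, 0)).1 = 0 ∧ (phiM M (0, t, 0)).2.2 = 0)
    (hz : ∀ t : ℝ, (M.mulVec ![0, 0, t, 1]) 3 ≠ 0 →
      (phiM M (0, 0, t)).1 = 0 ∧ (phiM M (0, 0, t)).2.1 = 0)
    (hD : HasFDerivAt (phiM M) (ContinuousLinearMap.id ℝ (ℝ × ℝ × ℝ)) ((0, 0, 0) : ℝ × ℝ × ℝ)) :
    ∃ c l : ℝ, 0 ≤ c ∧ l ≠ 0 ∧ M = l • Mc c := by
  have h33 : M 3 3 ≠ 0 := by
    have := h1 0 0 0 le_rfl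
    rw [mv] at this; simpa using this
  have h30 : M 3 0 = 0 := by
    by_contra h
    have := h1 (-(M 3 3) / M 3 0) 0 0 le_rfl
    rw [mv] at this
    apply this; field_simp; ring
  have h31 : M 3 1 = 0 := by
    by_contra h
    have := h1 0 (-(M 3 3) / M 3 1) 0 le_rfl
    rw [mv] at this
    apply this; field_simp; ring
  have hden1 : M 3 2 + M 3 3 ≠ 0 := by
    have := h1 0 0 1 zero_le_one
    rw [mv, h30, h31] at this
    intro h; apply this; linarith
  -- from h2: last column entries vanish
  have h2' := h2
  unfold phiM at h2'
  simp only [Prod.mk.injEq] at h2'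
  rw [mv, mv, mv, mv] at h2'
  simp only [mul_zero, zero_add] at h2'
  obtain ⟨e0, e1, e2⟩ := h2'
  have h03 : M 0 3 = 0 := by
    rcases div_eq_zero_iff.mp e0 with h | h
    · exact h
    · exact absurd h h33
  have h13 : M 1 3 = 0 := by
    rcases div_eq_zero_iff.mp e1 with h | h
    · exact h
    · exact absurd h h33
  have h23 : M 2 3 = 0 := by
    rcases div_eq_zero_iff.mp e2 with h | h
    · exact h
    · exact absurd h h33
  -- axis conditions at t = 1
  have hdx : (M.mulVec ![(1:ℝ), 0, 0, 1]) 3 ≠ 0 := by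
    rw [mv, h30, h31]; simpa using h33
  have hdy : (M.mulVec ![(0:ℝ), 1, 0, 1]) 3 ≠ 0 := by
    rw [mv, h30, h31]; simpa using h33
  have hdz : (M.mulVec ![(0:ℝ), 0, 1, 1]) 3 ≠ 0 := by
    rw [mv, h30, h31]; simpa using hden1
  have hx1 := hx 1 hdx
  have hy1 := hy 1 hdy
  have hz1 := hz 1 hdz
  unfold phiM at hx1 hy1 hz1
  simp only [mv] at hx1 hy1 hz1
  simp only [h03, h13, h23, h30, h31, mul_zero, mul_one, zero_mul, add_zero, zero_add]
    at hx1 hy1 hz1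
  have h10 : M 1 0 = 0 := by
    rcases div_eq_zero_iff.mp hx1.1 with h | h
    · exact h
    · exact absurd h h33
  have h20 : M 2 0 = 0 := by
    rcases div_eq_zero_iff.mp hx1.2 with h | h
    · exact h
    · exact absurd h h33
  have h01 : M 0 1 = 0 := by
    rcases div_eq_zero_iff.mp hy1.1 with h | h
    · exact h
    · exact absurd h h33
  have h21 : M 2 1 = 0 := by
    rcases div_eq_zero_iff.mp hy1.2 with h | h
    · exact h
    · exact absurd h h33
  have h02 : M 0 2 = 0 := by
    rcases div_eq_zero_iff.mp hz1.1 with h | h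
    · exact h
    · exact absurd h hden1
  have h12 : M 1 2 = 0 := by
    rcases div_eq_zero_iff.mp hz1.2 with h | h
    · exact h
    · exact absurd h hden1
  -- derivative along the x-axis
  have h00 : M 0 0 = M 3 3 := by
    set L : ℝ →L[ℝ] ℝ × ℝ × ℝ := ContinuousLinearMap.inl ℝ ℝ (ℝ × ℝ) with hL
    have hL0 : L 0 = ((0, 0, 0) : ℝ × ℝ × ℝ) := by simp [hL]; rfl
    have hcomp : HasFDerivAt (phiM M ∘ L)
        ((ContinuousLinearMap.id ℝ (ℝ × ℝ × ℝ)).comp L) 0 := by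
      refine HasFDerivAt.comp 0 ?_ L.hasFDerivAt
      rw [hL0]; exact hD
    have P : (ℝ × ℝ × ℝ) →L[ℝ] ℝ := ContinuousLinearMap.fst ℝ ℝ (ℝ × ℝ)
    have hproj : HasFDerivAt (fun t : ℝ => (phiM M (L t)).1)
        ((ContinuousLinearMap.fst ℝ ℝ (ℝ × ℝ)).comp
          ((ContinuousLinearMap.id ℝ (ℝ × ℝ × ℝ)).comp L)) 0 :=
      (ContinuousLinearMap.fst ℝ ℝ (ℝ × ℝ)).hasFDerivAt.comp 0 hcomp
    have hd1 : HasDerivAt (fun t : ℝ => (phiM M (L t)).1) 1 0 := by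
      have := hproj.hasDerivAt
      simpa [hL] using this
    have heq : (fun t : ℝ => (phiM M (L t)).1) = fun t => (M 0 0 / M 3 3) * t := by
      funext t
      have : L t = ((t, 0, 0) : ℝ × ℝ × ℝ) := by simp [hL]; rfl
      rw [this]
      unfold phiM
      simp only [mv]
      rw [h03, h30, h31]
      field_simp
      simp only [mul_zero, zero_mul, add_zero, zero_add]
      field_simp
    rw [heq] at hd1
    have hd2 : HasDerivAt (fun t : ℝ => (M 0 0 / M 3 3) * t) (M 0 0 / M 3 3) 0 := by
      simpa using (hasDerivAt_id (0:ℝ)).const_mul (M 0 0 / M 3 3)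
    have := hd1.unique hd2
    field_simp at this
    linarith
  -- derivative along the y-axis
  have h11 : M 1 1 = M 3 3 := by
    set L : ℝ →L[ℝ] ℝ × ℝ × ℝ :=
      ((0 : ℝ →L[ℝ] ℝ)).prod ((ContinuousLinearMap.id ℝ ℝ).prod 0) with hL
    have hL0 : L 0 = ((0, 0, 0) : ℝ × ℝ × ℝ) := by simp [hL]
    have hcomp : HasFDerivAt (phiM M ∘ L)
        ((ContinuousLinearMap.id ℝ (ℝ × ℝ × ℝ)).comp L) 0 := by
      refine HasFDerivAt.comp 0 ?_ L.hasFDerivAt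
      rw [hL0]; exact hD
    have hproj : HasFDerivAt (fun t : ℝ => (phiM M (L t)).2.1)
        (((ContinuousLinearMap.fst ℝ ℝ ℝ).comp (ContinuousLinearMap.snd ℝ ℝ (ℝ × ℝ))).comp
          ((ContinuousLinearMap.id ℝ (ℝ × ℝ × ℝ)).comp L)) 0 :=
      ((ContinuousLinearMap.fst ℝ ℝ ℝ).comp (ContinuousLinearMap.snd ℝ ℝ (ℝ × ℝ))).hasFDerivAt.comp 0 hcomp
    have hd1 : HasDerivAt (fun t : ℝ => (phiM M (L t)).2.1) 1 0 := by
      have := hproj.hasDerivAt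
      simpa [hL] using this
    have heq : (fun t : ℝ => (phiM M (L t)).2.1) = fun t => (M 1 1 / M 3 3) * t := by
      funext t
      have : L t = ((0, t, 0) : ℝ × ℝ × ℝ) := by simp [hL]
      rw [this]
      unfold phiM
      simp only [mv]
      rw [h13, h30, h31]
      field_simp
      simp only [mul_zero, zero_mul, add_zero, zero_add]
      field_simp
    rw [heq] at hd1
    have hd2 : HasDerivAt (fun t : ℝ => (M 1 1 / M 3 3) * t) (M 1 1 / M 3 3) 0 := by
      simpa using (hasDerivAt_id (0:ℝ)).const_mul (M 1 1 / M 3 3)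
    have := hd1.unique hd2
    field_simp at this
    linarith
  -- derivative along the z-axis
  have h22 : M 2 2 = M 3 3 := by
    set L : ℝ →L[ℝ] ℝ × ℝ × ℝ :=
      ((0 : ℝ →L[ℝ] ℝ)).prod (((0 : ℝ →L[ℝ] ℝ)).prod (ContinuousLinearMap.id ℝ ℝ)) with hL
    have hL0 : L 0 = ((0, 0, 0) : ℝ × ℝ × ℝ) := by simp [hL]
    have hcomp : HasFDerivAt (phiM M ∘ L)
        ((ContinuousLinearMap.id ℝ (ℝ × ℝ × ℝ)).comp L) 0 := by
      refine HasFDerivAt.comp 0 ?_ L.hasFDerivAt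
      rw [hL0]; exact hD
    have hproj : HasFDerivAt (fun t : ℝ => (phiM M (L t)).2.2)
        (((ContinuousLinearMap.snd ℝ ℝ ℝ).comp (ContinuousLinearMap.snd ℝ ℝ (ℝ × ℝ))).comp
          ((ContinuousLinearMap.id ℝ (ℝ × ℝ × ℝ)).comp L)) 0 :=
      ((ContinuousLinearMap.snd ℝ ℝ ℝ).comp (ContinuousLinearMap.snd ℝ ℝ (ℝ × ℝ))).hasFDerivAt.comp 0 hcomp
    have hd1 : HasDerivAt (fun t : ℝ => (phiM M (L t)).2.2) 1 0 := by
      have := hproj.hasDerivAt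
      simpa [hL] using this
    have heq : (fun t : ℝ => (phiM M (L t)).2.2)
        = fun t => (M 2 2 * t) / (M 3 2 * t + M 3 3) := by
      funext t
      have : L t = ((0, 0, t) : ℝ × ℝ × ℝ) := by simp [hL]
      rw [this]
      unfold phiM
      simp only [mv]
      rw [h23, h30, h31]
      ring_nf
    rw [heq] at hd1
    have hd2 : HasDerivAt (fun t => (M 2 2 * t) / (M 3 2 * t + M 3 3))
        ((M 2 2 * (M 3 2 * 0 + M 3 3) - (M 2 2 * 0) * M 3 2) / (M 3 2 * 0 + M 3 3) ^ 2) 0 := by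
      have hu : HasDerivAt (fun t : ℝ => M 2 2 * t) (M 2 2) 0 := by
        simpa using (hasDerivAt_id (0:ℝ)).const_mul (M 2 2)
      have hv : HasDerivAt (fun t : ℝ => M 3 2 * t + M 3 3) (M 3 2) 0 := by
        simpa using ((hasDerivAt_id (0:ℝ)).const_mul (M 3 2)).add_const (M 3 3)
      have hv0 : M 3 2 * 0 + M 3 3 ≠ 0 := by simpa using h33
      exact hu.div hv hv0
    have := hd1.unique hd2
    simp only [mul_zero, zero_add, zero_mul, sub_zero] at this
    field_simp at this
    rcases mul_eq_zero.mp (by linear_combination (M 3 3) * this : (M 3 3 - M 2 2) * M 3 3 = 0) with h | h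
    · linarith
    · exact absurd h h33
  -- sign of c
  have hc : 0 ≤ M 3 2 / M 3 3 := by
    by_contra hcon
    push_neg at hcon
    have h32ne : M 3 2 ≠ 0 := by
      intro h; rw [h] at hcon; simp at hcon
    have hz0 : (0:ℝ) ≤ -(M 3 3) / M 3 2 := by
      rw [div_neg_iff] at hcon
      rcases hcon with ⟨ha, hb⟩ | ⟨ha, hb⟩
      · apply le_of_lt; apply div_pos (by linarith) ha
      · apply le_of_lt
        rw [div_pos_iff]; right; constructor <;> linarith
    have := h1 0 0 (-(M 3 3) / M 3 2) hz0
    rw [mv, h30, h31] at this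
    apply this
    field_simp
    ring
  refine ⟨M 3 2 / M 3 3, M 3 3, hc, h33, ?_⟩
  have h32' : M 3 2 = M 3 3 * (M 3 2 / M 3 3) := by field_simp
  ext i j
  fin_cases i <;> fin_cases j <;>
    simp [Mc, h00, h11, h22, h01, h02, h03, h10, h12, h13, h20, h21, h23, h30, h31, ← h32'] <;>
    exact Or.inr rfl
end

section
/- Let M be a real 4×4 matrix such that (M·(x,y,z,1)ᵀ)₄ ≠ 0 for all (x,y,z) ∈ ℝ³ with z ≥ 0, and such that φ_M maps each coordinate axis into itself, i.e. for every t ∈ ℝ at which the relevant point is in the domain, φ_M(t,0,0) has vanishing second and third coordinates, φ_M(0,t,0) has vanishing first and third coordinates, and φ_M(0,0,t) has vanishing first and second coordinates. Then the off-diagonal entries of the upper-left 3×3 block of M vanish (M₁₂ = M₁₃ = M₂₁ = M₂₃ = M₃₁ = M₃₂ = 0) and the first three entries of the last column of M vanish (M₁₄ = M₂₄ = M₃₄ = 0). -/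
open Matrix

/-- Axis preservation forces the off-diagonal entries of the upper-left 3×3 block
and the first three entries of the last column of `M` to vanish. -/
theorem stmt_1 (M : Matrix (Fin 4) (Fin 4) ℝ)
    (h1 : ∀ x y z : ℝ, 0 ≤ z → (M.mulVec ![x, y, z, 1]) 3 ≠ 0)
    (hx : ∀ t : ℝ, (M.mulVec ![t, 0, 0, 1]) 3 ≠ 0 →
      (phiM M (t, 0, 0)).2.1 = 0 ∧ (phiM M (t, 0, 0)).2.2 = 0)
    (hy : ∀ t : ℝ, (M.mulVec ![0, t, 0, 1]) 3 ≠ 0 →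
      (phiM M (0, t, 0)).1 = 0 ∧ (phiM M (0, t, 0)).2.2 = 0)
    (hz : ∀ t : ℝ, (M.mulVec ![0, 0, t, 1]) 3 ≠ 0 →
      (phiM M (0, 0, t)).1 = 0 ∧ (phiM M (0, 0, t)).2.1 = 0) :
    M 0 1 = 0 ∧ M 0 2 = 0 ∧ M 1 0 = 0 ∧ M 1 2 = 0 ∧ M 2 0 = 0 ∧ M 2 1 = 0 ∧
      M 0 3 = 0 ∧ M 1 3 = 0 ∧ M 2 3 = 0 := by
  have hxnum : ∀ t : ℝ, M 1 0 * t + M 1 3 = 0 ∧ M 2 0 * t + M 2 3 = 0 := by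
    intro t
    have hd := h1 t 0 0 le_rfl
    have h := hx t hd
    simp only [phiM, div_eq_zero_iff] at h
    simp only [mulVec, dotProduct, Fin.sum_univ_four, Matrix.cons_val_zero,
      Matrix.cons_val_one, Matrix.head_cons, Matrix.cons_val_two, Matrix.tail_cons,
      Matrix.cons_val_three, mul_zero, mul_one, add_zero] at h hd
    exact ⟨h.1.resolve_right hd, h.2.resolve_right hd⟩
  have hynum : ∀ t : ℝ, M 0 1 * t + M 0 3 = 0 ∧ M 2 1 * t + M 2 3 = 0 := by
    intro t
    have hd := h1 0 t 0 le_rfl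
    have h := hy t hd
    simp only [phiM, div_eq_zero_iff] at h
    simp only [mulVec, dotProduct, Fin.sum_univ_four, Matrix.cons_val_zero,
      Matrix.cons_val_one, Matrix.head_cons, Matrix.cons_val_two, Matrix.tail_cons,
      Matrix.cons_val_three, mul_zero, mul_one, zero_add, add_zero] at h hd
    exact ⟨h.1.resolve_right hd, h.2.resolve_right hd⟩
  have hznum : ∀ t : ℝ, 0 ≤ t → M 0 2 * t + M 0 3 = 0 ∧ M 1 2 * t + M 1 3 = 0 := by
    intro t ht
    have hd := h1 0 0 t ht
    have h := hz t hd
    simp only [phiM, div_eq_zero_iff] at h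
    simp only [mulVec, dotProduct, Fin.sum_univ_four, Matrix.cons_val_zero,
      Matrix.cons_val_one, Matrix.head_cons, Matrix.cons_val_two, Matrix.tail_cons,
      Matrix.cons_val_three, mul_zero, mul_one, zero_add, add_zero] at h hd
    exact ⟨h.1.resolve_right hd, h.2.resolve_right hd⟩
  have h13 : M 1 3 = 0 := by have := (hxnum 0).1; linarith
  have h23 : M 2 3 = 0 := by have := (hxnum 0).2; linarith
  have h10 : M 1 0 = 0 := by have := (hxnum 1).1; linarith
  have h20 : M 2 0 = 0 := by have := (hxnum 1).2; linarith
  have h03 : M 0 3 = 0 := by have := (hynum 0).1; linarith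
  have h01 : M 0 1 = 0 := by have := (hynum 1).1; linarith
  have h21 : M 2 1 = 0 := by have := (hynum 1).2; linarith
  have h02 : M 0 2 = 0 := by have := (hznum 1 zero_le_one).1; linarith
  have h12 : M 1 2 = 0 := by have := (hznum 1 zero_le_one).2; linarith
  exact ⟨h01, h02, h10, h12, h20, h21, h03, h13, h23⟩
end

section
/- Fix c > 0, x, y ∈ ℝ, and λ = (λ₁,λ₂,λ₃) ∈ ℝ³ with (λ₁,λ₂) ≠ (0,0). Then, as z → +∞, the Euclidean norm of the Fréchet derivative of φ_c at (x,y,z) applied to λ satisfies z·‖Dφ_c(x,y,z)[λ]‖ → √(λ₁² + λ₂²)/c; equivalently, ‖Dφ_c(x,y,z)[λ]‖ is asymptotically equivalent to C/z with C = √(λ₁² + λ₂²)/c. -/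
/-- The point `(x, y, z)` of `ℝ³` with the Euclidean norm. -/
noncomputable def pt (x y z : ℝ) : EuclideanSpace ℝ (Fin 3) :=
  (WithLp.equiv 2 (Fin 3 → ℝ)).symm ![x, y, z]

/-- The projective chart `φ_c(x,y,z) = (x/(c·z+1), y/(c·z+1), z/(c·z+1))` with
depth of field `1/c`, induced by the 4×4 matrix with ones on the diagonal,
entry `c` in row 4 column 3, and zeros elsewhere. -/
noncomputable def phic (c : ℝ) (p : EuclideanSpace ℝ (Fin 3)) : EuclideanSpace ℝ (Fin 3) :=
  pt (p 0 / (c * p 2 + 1)) (p 1 / (c * p 2 + 1)) (p 2 / (c * p 2 + 1))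

lemma phic_eq (c : ℝ) (p : EuclideanSpace ℝ (Fin 3)) :
    phic c p = (c * p 2 + 1)⁻¹ • p := by
  unfold phic pt
  ext i
  fin_cases i <;> simp [div_eq_inv_mul, PiLp.smul_apply]

lemma pt_apply (x y z : ℝ) (i : Fin 3) : pt x y z i = ![x, y, z] i := by
  simp [pt]

lemma fderiv_phic_apply (c : ℝ) (p : EuclideanSpace ℝ (Fin 3)) (hd : c * p 2 + 1 ≠ 0)
    (l : EuclideanSpace ℝ (Fin 3)) :
    fderiv ℝ (phic c) p l
      = (c * p 2 + 1)⁻¹ • l + (-(c * l 2) / (c * p 2 + 1) ^ 2) • p := by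
  have h1 : HasFDerivAt (fun q : EuclideanSpace ℝ (Fin 3) => c * q 2 + 1)
      (c • (EuclideanSpace.proj (2 : Fin 3) : EuclideanSpace ℝ (Fin 3) →L[ℝ] ℝ)) p :=
    by exact (((EuclideanSpace.proj (2 : Fin 3) : EuclideanSpace ℝ (Fin 3) →L[ℝ] ℝ).hasFDerivAt (x := p)).const_mul c).add_const 1
  have h2 := ((hasFDerivAt_inv hd).comp p h1).smul (hasFDerivAt_id p)
  have h3 := h2.congr_of_eventuallyEq (Filter.Eventually.of_forall fun q => phic_eq c q)
  rw [h3.fderiv]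
  simp [ContinuousLinearMap.smul_apply]
  ext i
  simp [PiLp.smul_apply, PiLp.add_apply]
  ring

/-- Stevens' law (length part): for a direction `λ` not aligned with the direction of
sight, `‖Dφ_c(x,y,z)[λ]‖` is asymptotically equivalent to `C/z` with
`C = √(λ₁² + λ₂²)/c` as `z → +∞`. -/
theorem stmt_5 (c : ℝ) (hc : 0 < c) (x y : ℝ) (l : EuclideanSpace ℝ (Fin 3))
    (hl : (l 0, l 1) ≠ ((0 : ℝ), (0 : ℝ))) :
    Filter.Tendsto (fun z : ℝ => z * ‖fderiv ℝ (phic c) (pt x y z) l‖)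
      Filter.atTop (nhds (Real.sqrt (l 0 ^ 2 + l 1 ^ 2) / c)) := by
  -- auxiliary limits
  have hd_top : Filter.Tendsto (fun z : ℝ => c * z + 1) Filter.atTop Filter.atTop :=
    Filter.tendsto_atTop_add_const_right _ 1 (Filter.Tendsto.const_mul_atTop hc Filter.tendsto_id)
  have hu : Filter.Tendsto (fun z : ℝ => z / (c * z + 1)) Filter.atTop (nhds c⁻¹) := by
    have h1 : Filter.Tendsto (fun z : ℝ => c + z⁻¹) Filter.atTop (nhds c) := by
      simpa using (tendsto_const_nhds : Filter.Tendsto (fun _ : ℝ => c) Filter.atTop (nhds c)).add tendsto_inv_atTop_zero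
    have h2 := h1.inv₀ hc.ne'
    apply h2.congr'
    filter_upwards [Filter.eventually_gt_atTop 0] with z hz
    have hz' : z ≠ 0 := hz.ne'
    field_simp
  have hinv : Filter.Tendsto (fun z : ℝ => (c * z + 1)⁻¹) Filter.atTop (nhds 0) :=
    hd_top.inv_tendsto_atTop
  have hw : Filter.Tendsto (fun z : ℝ => z / (c * z + 1) ^ 2) Filter.atTop (nhds 0) := by
    have := hu.mul hinv
    rw [mul_zero] at this
    apply this.congr'
    filter_upwards [Filter.eventually_gt_atTop 0] with z hz
    simp [sq, div_eq_mul_inv, mul_inv, mul_assoc]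
  -- the three coordinate limits
  have t0 : Filter.Tendsto (fun z : ℝ => l 0 * (z / (c * z + 1)) - (c * l 2 * x) * (z / (c * z + 1) ^ 2))
      Filter.atTop (nhds (l 0 / c)) := by
    have := (hu.const_mul (l 0)).sub (hw.const_mul (c * l 2 * x))
    simpa [div_eq_mul_inv, mul_comm] using this
  have t1 : Filter.Tendsto (fun z : ℝ => l 1 * (z / (c * z + 1)) - (c * l 2 * y) * (z / (c * z + 1) ^ 2))
      Filter.atTop (nhds (l 1 / c)) := by
    have := (hu.const_mul (l 1)).sub (hw.const_mul (c * l 2 * y))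
    simpa [div_eq_mul_inv, mul_comm] using this
  have t2 : Filter.Tendsto (fun z : ℝ => l 2 * (z / (c * z + 1) ^ 2))
      Filter.atTop (nhds 0) := by
    simpa using hw.const_mul (l 2)
  have tsum : Filter.Tendsto (fun z : ℝ =>
      (l 0 * (z / (c * z + 1)) - (c * l 2 * x) * (z / (c * z + 1) ^ 2)) ^ 2
      + (l 1 * (z / (c * z + 1)) - (c * l 2 * y) * (z / (c * z + 1) ^ 2)) ^ 2
      + (l 2 * (z / (c * z + 1) ^ 2)) ^ 2)
      Filter.atTop (nhds ((l 0 / c) ^ 2 + (l 1 / c) ^ 2)) := by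
    have := ((t0.pow 2).add (t1.pow 2)).add (t2.pow 2)
    simpa using this
  have tsqrt := (Real.continuous_sqrt.tendsto _).comp tsum
  have hval : Real.sqrt ((l 0 / c) ^ 2 + (l 1 / c) ^ 2) = Real.sqrt (l 0 ^ 2 + l 1 ^ 2) / c := by
    rw [div_pow, div_pow, ← add_div, Real.sqrt_div (by positivity), Real.sqrt_sq hc.le]
  rw [hval] at tsqrt
  apply tsqrt.congr'
  filter_upwards [Filter.eventually_gt_atTop 0] with z hz
  have hd : c * (pt x y z) 2 + 1 ≠ 0 := by
    simp [pt_apply]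
    positivity
  rw [fderiv_phic_apply c _ hd l]
  rw [EuclideanSpace.norm_eq]
  rw [Fin.sum_univ_three]
  simp only [PiLp.add_apply, PiLp.smul_apply, pt_apply, smul_eq_mul, Real.norm_eq_abs, sq_abs]
  rw [Function.comp_apply, ← Real.sqrt_sq hz.le, ← Real.sqrt_mul (by positivity)]
  congr 1
  have hdz : c * z + 1 > 0 := by positivity
  simp only [Matrix.cons_val_zero, Matrix.cons_val_one, Matrix.head_cons, Matrix.cons_val_two, Matrix.tail_cons]
  field_simp
  rw [Real.sqrt_sq hz.le]
  ring
end

section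
/- Fix c ∈ ℝ and (x,y,z) ∈ ℝ³ with c·z + 1 > 0, and let λ = (λ₁,λ₂,0) ∈ ℝ³ be a vector orthogonal to the direction of sight (third coordinate zero). Then the Euclidean norm of the Fréchet derivative of φ_c at (x,y,z) applied to λ equals √(λ₁² + λ₂²)/(c·z + 1); i.e., the ratio of perceived size to true size is exactly 1/(c·z + 1) for objects aligned with the plane orthogonal to the direction of sight. -/
/-- Stevens' law, exact case: for a vector `λ = (λ₁, λ₂, 0)` orthogonal to the direction of
sight, the ratio of perceived size to true size is exactly `1/(c·z + 1)`. -/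
theorem stmt_6 (c x y z : ℝ) (h : 0 < c * z + 1) (l : EuclideanSpace ℝ (Fin 3))
    (hl : l 2 = 0) :
    ‖fderiv ℝ (phic c) (pt x y z) l‖ = Real.sqrt (l 0 ^ 2 + l 1 ^ 2) / (c * z + 1) := by
  have ha : c * z + 1 ≠ 0 := ne_of_gt h
  set a := c * z + 1 with haa
  -- derivative of the denominator
  have hden : HasFDerivAt (fun p : EuclideanSpace ℝ (Fin 3) => c * p 2 + 1)
      (c • (EuclideanSpace.proj 2 : EuclideanSpace ℝ (Fin 3) →L[ℝ] ℝ)) (pt x y z) := by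
    have h1 : HasFDerivAt (fun p : EuclideanSpace ℝ (Fin 3) => p 2)
        (EuclideanSpace.proj 2 : EuclideanSpace ℝ (Fin 3) →L[ℝ] ℝ) (pt x y z) :=
      (EuclideanSpace.proj (2 : Fin 3) :
        EuclideanSpace ℝ (Fin 3) →L[ℝ] ℝ).hasFDerivAt
    simpa using (h1.const_mul c).add_const 1
  -- derivative of the inverse of the denominator
  have hinv : HasFDerivAt (fun p : EuclideanSpace ℝ (Fin 3) => (c * p 2 + 1)⁻¹)
      ((-(a ^ 2)⁻¹) • (c • (EuclideanSpace.proj 2 : EuclideanSpace ℝ (Fin 3) →L[ℝ] ℝ)))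
      (pt x y z) := by
    have := (hasDerivAt_inv (x := a) ha).comp_hasFDerivAt (pt x y z) hden
    exact this
  -- derivative of each coordinate
  have hcoord : ∀ i : Fin 3, HasFDerivAt
      (fun p : EuclideanSpace ℝ (Fin 3) => p i * (c * p 2 + 1)⁻¹)
      ((pt x y z i) • ((-(a ^ 2)⁻¹) • (c • (EuclideanSpace.proj 2 :
          EuclideanSpace ℝ (Fin 3) →L[ℝ] ℝ)))
        + a⁻¹ • (EuclideanSpace.proj i : EuclideanSpace ℝ (Fin 3) →L[ℝ] ℝ))
      (pt x y z) := by
    intro i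
    have hi : HasFDerivAt (fun p : EuclideanSpace ℝ (Fin 3) => p i)
        (EuclideanSpace.proj i : EuclideanSpace ℝ (Fin 3) →L[ℝ] ℝ) (pt x y z) :=
      (EuclideanSpace.proj i : EuclideanSpace ℝ (Fin 3) →L[ℝ] ℝ).hasFDerivAt
    exact hi.mul hinv
  -- package into the pi derivative
  set D : Fin 3 → (EuclideanSpace ℝ (Fin 3) →L[ℝ] ℝ) := fun i =>
    (pt x y z i) • ((-(a ^ 2)⁻¹) • (c • (EuclideanSpace.proj 2 :
        EuclideanSpace ℝ (Fin 3) →L[ℝ] ℝ)))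
      + a⁻¹ • (EuclideanSpace.proj i : EuclideanSpace ℝ (Fin 3) →L[ℝ] ℝ) with hD
  have hF : HasFDerivAt
      (fun (p : EuclideanSpace ℝ (Fin 3)) (i : Fin 3) => p i * (c * p 2 + 1)⁻¹)
      (ContinuousLinearMap.pi D) (pt x y z) :=
    hasFDerivAt_pi.2 hcoord
  -- phic as a composition
  set e := PiLp.continuousLinearEquiv 2 ℝ (fun _ : Fin 3 => ℝ) with he
  have hphi_eq : phic c = fun p => e.symm
      (fun i : Fin 3 => p i * (c * p 2 + 1)⁻¹) := by
    funext p
    ext i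
    fin_cases i <;>
      simp [phic, pt, div_eq_mul_inv, he, WithLp.equiv_symm_apply, PiLp.toLp_apply,
        PiLp.continuousLinearEquiv_symm_apply]
  have hphi : HasFDerivAt (phic c)
      ((e.symm : ((Fin 3) → ℝ) →L[ℝ] EuclideanSpace ℝ (Fin 3)).comp
        (ContinuousLinearMap.pi D)) (pt x y z) := by
    rw [hphi_eq]
    exact ((e.symm : ((Fin 3) → ℝ) →L[ℝ] EuclideanSpace ℝ (Fin 3)).hasFDerivAt).comp
      (pt x y z) hF
  rw [hphi.fderiv]
  -- compute the value
  have hval : ∀ i : Fin 3,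
      (((e.symm : ((Fin 3) → ℝ) →L[ℝ] EuclideanSpace ℝ (Fin 3)).comp
        (ContinuousLinearMap.pi D)) l) i = D i l := fun i => rfl
  have hDl : ∀ i : Fin 3, D i l = a⁻¹ * l i := by
    intro i
    simp [hD, hl]
  rw [EuclideanSpace.norm_eq]
  have : ∀ i : Fin 3,
      ‖(((e.symm : ((Fin 3) → ℝ) →L[ℝ] EuclideanSpace ℝ (Fin 3)).comp
        (ContinuousLinearMap.pi D)) l) i‖ ^ 2 = (a⁻¹ * l i) ^ 2 := by
    intro i; rw [hval i, hDl i]; rw [Real.norm_eq_abs, sq_abs]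
  rw [Fin.sum_univ_three, this 0, this 1, this 2, hl]
  have hsum : (a⁻¹ * l 0) ^ 2 + (a⁻¹ * l 1) ^ 2 + (a⁻¹ * 0) ^ 2
      = (a⁻¹) ^ 2 * (l 0 ^ 2 + l 1 ^ 2) := by ring
  rw [hsum, Real.sqrt_mul (by positivity), Real.sqrt_sq (by positivity),
    inv_mul_eq_div]
end

section
/- Fix c ∈ ℝ and (x,y,z) ∈ ℝ³ with c·z + 1 ≠ 0. Then the determinant of the Fréchet derivative of φ_c at (x,y,z) (as a linear map ℝ³ → ℝ³) equals 1/(c·z + 1)⁴. -/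
/-- The determinant of the Fréchet derivative of `φ_c` at `(x,y,z)` (as a linear map
`ℝ³ → ℝ³`) equals `1/(c·z + 1)⁴`: the infinitesimal ratio of perceived volume to true
volume. -/
theorem stmt_8 (c x y z : ℝ) (h : c * z + 1 ≠ 0) :
    LinearMap.det ((fderiv ℝ (phic c) (pt x y z)).toLinearMap) = 1 / (c * z + 1) ^ 4 := by
  set w : ℝ := c * z + 1 with hwdef
  set v : Fin 3 → ℝ := ![x, y, z] with hv
  set M : Matrix (Fin 3) (Fin 3) ℝ :=
    !![w⁻¹, 0, -(c*x)/w^2; 0, w⁻¹, -(c*y)/w^2; 0, 0, (w^2)⁻¹] with hM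
  set L : (Fin 3 → ℝ) →L[ℝ] (Fin 3 → ℝ) :=
    LinearMap.toContinuousLinearMap (Matrix.toLin' M) with hL
  set g : (Fin 3 → ℝ) → (Fin 3 → ℝ) := fun u =>
    ![u 0 / (c * u 2 + 1), u 1 / (c * u 2 + 1), u 2 / (c * u 2 + 1)] with hgdef
  have hg : HasFDerivAt g L v := by
    apply hasFDerivAt_pi''
    intro i
    have hD : HasFDerivAt (fun u : Fin 3 → ℝ => c * u 2 + 1)
        (c • ContinuousLinearMap.proj 2 : (Fin 3 → ℝ) →L[ℝ] ℝ) v := by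
      simpa using ((hasFDerivAt_apply (2 : Fin 3) v).const_mul c).add_const 1
    have hinv : HasFDerivAt (fun u : Fin 3 → ℝ => (c * u 2 + 1)⁻¹)
        ((ContinuousLinearMap.smulRight (1 : ℝ →L[ℝ] ℝ) (-(w ^ 2)⁻¹)).comp
          (c • ContinuousLinearMap.proj 2 : (Fin 3 → ℝ) →L[ℝ] ℝ)) v :=
      (hasFDerivAt_inv (x := w) h).comp v hD
    have hmul := (hasFDerivAt_apply i v).mul hinv
    have hfe : (fun u : Fin 3 → ℝ => g u i) = fun u => u i * (c * u 2 + 1)⁻¹ := by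
      funext u; fin_cases i <;> simp [hgdef, div_eq_mul_inv]
    rw [show (fun u : Fin 3 → ℝ => g u i) = fun u => u i * (c * u 2 + 1)⁻¹ from hfe]
    convert hmul using 1
    · rfl
    · rfl
    ext u
    fin_cases i <;>
      simp [hL, hM, Matrix.toLin'_apply, Matrix.mulVec, dotProduct,
        Fin.sum_univ_three, hv] <;>
      field_simp <;> (rw [hwdef]; have h' : 1 + c * z ≠ 0 := (by rwa [add_comm]); field_simp; ring)
  set e : EuclideanSpace ℝ (Fin 3) ≃L[ℝ] (Fin 3 → ℝ) := EuclideanSpace.equiv (Fin 3) ℝ with hee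
  have he : HasFDerivAt (⇑e) (e : EuclideanSpace ℝ (Fin 3) →L[ℝ] (Fin 3 → ℝ)) (pt x y z) :=
    e.hasFDerivAt
  have h1 : HasFDerivAt (g ∘ ⇑e) (L.comp (e : EuclideanSpace ℝ (Fin 3) →L[ℝ] (Fin 3 → ℝ)))
      (pt x y z) := hg.comp (pt x y z) he
  have h2 : HasFDerivAt (⇑e.symm ∘ g ∘ ⇑e)
      (((e.symm : (Fin 3 → ℝ) →L[ℝ] EuclideanSpace ℝ (Fin 3))).comp
        (L.comp (e : EuclideanSpace ℝ (Fin 3) →L[ℝ] (Fin 3 → ℝ)))) (pt x y z) :=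
    (e.symm.hasFDerivAt).comp (pt x y z) h1
  have hfun : (⇑e.symm ∘ g ∘ ⇑e) = phic c := rfl
  rw [hfun] at h2
  rw [h2.fderiv]
  have hdet : LinearMap.det
      ((((e.symm : (Fin 3 → ℝ) →L[ℝ] EuclideanSpace ℝ (Fin 3))).comp
        (L.comp (e : EuclideanSpace ℝ (Fin 3) →L[ℝ] (Fin 3 → ℝ)))).toLinearMap)
      = LinearMap.det (Matrix.toLin' M) := by
    have : (((e.symm : (Fin 3 → ℝ) →L[ℝ] EuclideanSpace ℝ (Fin 3))).comp
        (L.comp (e : EuclideanSpace ℝ (Fin 3) →L[ℝ] (Fin 3 → ℝ)))).toLinearMap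
        = (e.symm.toLinearEquiv : (Fin 3 → ℝ) →ₗ[ℝ] EuclideanSpace ℝ (Fin 3)) ∘ₗ
          (Matrix.toLin' M) ∘ₗ (e.symm.toLinearEquiv.symm : EuclideanSpace ℝ (Fin 3) →ₗ[ℝ] (Fin 3 → ℝ)) := by
      rfl
    rw [this, LinearMap.det_conj]
  rw [hdet, LinearMap.det_toLin']
  rw [Matrix.det_fin_three]
  simp [hM, Matrix.vecHead, Matrix.vecTail]
  field_simp
end

section
/- Fix c > 0 and x, y ∈ ℝ. Then, as z → +∞, (c·z)⁴ times the determinant of the Fréchet derivative of φ_c at (x,y,z) tends to 1; i.e., the infinitesimal ratio of perceived volume to true volume is asymptotically equivalent to 1/(c·z)⁴. -/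
/-- The chart as a plain map `ℝ³ → ℝ³` (product topology/norm). -/
noncomputable def fplain (c : ℝ) (q : Fin 3 → ℝ) : Fin 3 → ℝ :=
  ![q 0 / (c * q 2 + 1), q 1 / (c * q 2 + 1), q 2 / (c * q 2 + 1)]

/-- The Jacobian matrix of `fplain c` at `q`. -/
noncomputable def Mat (c : ℝ) (q : Fin 3 → ℝ) : Matrix (Fin 3) (Fin 3) ℝ :=
  !![1/(c * q 2 + 1), 0, -(q 0 * c)/(c * q 2 + 1)^2;
     0, 1/(c * q 2 + 1), -(q 1 * c)/(c * q 2 + 1)^2;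
     0, 0, 1/(c * q 2 + 1)^2]

theorem hasfd (c : ℝ) (q : Fin 3 → ℝ) (hw : c * q 2 + 1 ≠ 0) :
    HasFDerivAt (fplain c) (LinearMap.toContinuousLinearMap (Matrix.toLin' (Mat c q))) q := by
  have h1 : HasFDerivAt (fun q : Fin 3 → ℝ => c * q 2 + 1)
      ((c • ContinuousLinearMap.proj 2 : (Fin 3 → ℝ) →L[ℝ] ℝ)) q := by
    have := (HasFDerivAt.const_mul (𝕜 := ℝ) (hasFDerivAt_apply (2 : Fin 3) q) c).add_const (1:ℝ)
    exact this
  have h2 : HasFDerivAt (fun q : Fin 3 → ℝ => (c * q 2 + 1)⁻¹)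
      ((ContinuousLinearMap.smulRight (1 : ℝ →L[ℝ] ℝ) (-((c * q 2 + 1) ^ 2)⁻¹)).comp
        ((c • ContinuousLinearMap.proj 2 : (Fin 3 → ℝ) →L[ℝ] ℝ))) q :=
    (hasFDerivAt_inv hw).comp q h1
  have hfp : ∀ (i : Fin 3), (fun q : Fin 3 → ℝ => fplain c q i)
      = fun q : Fin 3 → ℝ => q i * (c * q 2 + 1)⁻¹ := by
    intro i; funext q; fin_cases i <;> simp [fplain, div_eq_mul_inv]
  rw [hasFDerivAt_pi']
  intro i
  fin_cases i
  · rw [hfp _]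
    have hm := HasFDerivAt.mul (𝕜 := ℝ) (hasFDerivAt_apply (0 : Fin 3) q) h2
    refine hm.congr_fderiv ?_
    ext v
    simp [Mat, Matrix.toLin'_apply, Matrix.mulVec, Fin.sum_univ_three, Matrix.vecHead,
      Matrix.vecTail]
    field_simp
    ring
  · rw [hfp _]
    have hm := HasFDerivAt.mul (𝕜 := ℝ) (hasFDerivAt_apply (1 : Fin 3) q) h2
    refine hm.congr_fderiv ?_
    ext v
    simp [Mat, Matrix.toLin'_apply, Matrix.mulVec, Fin.sum_univ_three, Matrix.vecHead,
      Matrix.vecTail]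
    field_simp
    ring
  · rw [hfp _]
    have hm := HasFDerivAt.mul (𝕜 := ℝ) (hasFDerivAt_apply (2 : Fin 3) q) h2
    refine hm.congr_fderiv ?_
    ext v
    simp [Mat, Matrix.toLin'_apply, Matrix.mulVec, Fin.sum_univ_three, Matrix.vecHead,
      Matrix.vecTail]
    field_simp
    ring

theorem det_fderiv_phic (c x y z : ℝ) (hw : c * z + 1 ≠ 0) :
    LinearMap.det ((fderiv ℝ (phic c) (pt x y z)).toLinearMap) = ((c * z + 1) ^ 4)⁻¹ := by
  set L : EuclideanSpace ℝ (Fin 3) ≃L[ℝ] (Fin 3 → ℝ) :=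
    PiLp.continuousLinearEquiv 2 ℝ (fun _ : Fin 3 => ℝ) with hL
  have hphi : phic c = fun p => L.symm (fplain c (L p)) := by
    funext p; rfl
  have hw' : c * (![x, y, z] : Fin 3 → ℝ) 2 + 1 ≠ 0 := by simpa using hw
  have hF := hasfd c ![x, y, z] hw'
  have hD : HasFDerivAt (phic c)
      ((L.symm : (Fin 3 → ℝ) →L[ℝ] EuclideanSpace ℝ (Fin 3)).comp
        ((LinearMap.toContinuousLinearMap (Matrix.toLin' (Mat c ![x, y, z]))).comp
          (L : EuclideanSpace ℝ (Fin 3) →L[ℝ] (Fin 3 → ℝ)))) (pt x y z) := by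
    rw [hphi]
    have hL1 : HasFDerivAt (⇑L) (L : EuclideanSpace ℝ (Fin 3) →L[ℝ] (Fin 3 → ℝ)) (pt x y z) :=
      L.hasFDerivAt
    have hF' : HasFDerivAt (fplain c)
        (LinearMap.toContinuousLinearMap (Matrix.toLin' (Mat c ![x, y, z]))) (L (pt x y z)) := hF
    have hL2 : HasFDerivAt (⇑L.symm)
        (L.symm : (Fin 3 → ℝ) →L[ℝ] EuclideanSpace ℝ (Fin 3)) (fplain c (L (pt x y z))) :=
      L.symm.hasFDerivAt
    exact hL2.comp (pt x y z) (hF'.comp (pt x y z) hL1)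
  rw [hD.fderiv]
  have : ((L.symm : (Fin 3 → ℝ) →L[ℝ] EuclideanSpace ℝ (Fin 3)).comp
        ((LinearMap.toContinuousLinearMap (Matrix.toLin' (Mat c ![x, y, z]))).comp
          (L : EuclideanSpace ℝ (Fin 3) →L[ℝ] (Fin 3 → ℝ)))).toLinearMap
      = (L.symm.toLinearEquiv : (Fin 3 → ℝ) →ₗ[ℝ] EuclideanSpace ℝ (Fin 3)) ∘ₗ
        (Matrix.toLin' (Mat c ![x, y, z])) ∘ₗ
        (L.symm.toLinearEquiv.symm : EuclideanSpace ℝ (Fin 3) →ₗ[ℝ] (Fin 3 → ℝ)) := by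
    rfl
  rw [this, LinearMap.det_conj, LinearMap.det_toLin']
  simp [Mat, Matrix.det_fin_three, Matrix.vecHead, Matrix.vecTail]
  field_simp

/-- Stevens' law (volume part): as `z → +∞`, `(c·z)⁴` times the Jacobian determinant of
`φ_c` at `(x,y,z)` tends to `1`; i.e. the infinitesimal ratio of perceived volume to true
volume is asymptotically equivalent to `1/(c·z)⁴`. -/
theorem stmt_9 (c : ℝ) (hc : 0 < c) (x y : ℝ) :
    Filter.Tendsto
      (fun z : ℝ => (c * z) ^ 4 * LinearMap.det ((fderiv ℝ (phic c) (pt x y z)).toLinearMap))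
      Filter.atTop (nhds 1) := by
  have h1 : Filter.Tendsto (fun z : ℝ => c * z + 1) Filter.atTop Filter.atTop :=
    Filter.tendsto_atTop_add_const_right _ 1
      (Filter.Tendsto.const_mul_atTop hc Filter.tendsto_id)
  have h2 : Filter.Tendsto (fun z : ℝ => (c * z + 1)⁻¹) Filter.atTop (nhds 0) :=
    h1.inv_tendsto_atTop
  have h3 : Filter.Tendsto (fun z : ℝ => (1 - (c * z + 1)⁻¹) ^ 4) Filter.atTop (nhds 1) := by
    have h := ((tendsto_const_nhds : Filter.Tendsto (fun _ : ℝ => (1:ℝ))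
      Filter.atTop (nhds 1)).sub h2).pow 4
    simpa using h
  refine h3.congr' ?_
  filter_upwards [Filter.eventually_gt_atTop 0] with z hz
  have hw : c * z + 1 ≠ 0 := by positivity
  rw [det_fderiv_phic c x y z hw]
  field_simp
  ring
end
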